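/- Let G be a finite simple graph on n vertices admitting an ordering v_1, …, v_n of its vertices such that for every i, the vertex v_i has at most k neighbors among v_1, …, v_{i−1} and these earlier neighbors pairwise form a clique in G. Then G admits an acyclic proper vertex coloring with k + 1 colors. -/

import Mathlib

/-!
Colour greedily along the ordering: a vertex has at most `k` earlier neighbours, so one of the
`k + 1` colours is free for it. Any proper colouring is then acyclic. Along a cycle using only two
colours, look at its last vertex `m` in the ordering: its two neighbours on the cycle are distinct
earlier neighbours of `m`, hence adjacent, so `m` and these two neighbours carry three different
colours.
-/

open Finset
open scoped Classical

/-- `cV` is an acyclic proper vertex coloring of `G` with `k` colors: adjacent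
vertices get distinct colors, and the subgraph induced by the union of any two
color classes contains no cycle. -/
def IsAcyclicProperColoring {V : Type*} (G : SimpleGraph V) {k : ℕ}
    (cV : V → Fin k) : Prop :=
  (∀ u v, G.Adj u v → cV u ≠ cV v) ∧
  ∀ a b : Fin k,
    (SimpleGraph.fromRel fun u v =>
      G.Adj u v ∧ (cV u = a ∨ cV u = b) ∧ (cV v = a ∨ cV v = b)).IsAcyclic

namespace SimpleGraph

section Greedy

variable {V : Type*} [Fintype V] (G : SimpleGraph V) (f : V → ℕ)

noncomputable def earlierNeighborFinset (v : V) : Finset V :=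
  univ.filter fun u => G.Adj v u ∧ f u < f v

variable {G f} {k : ℕ}

noncomputable def greedyColoring (hdeg : ∀ v, #(G.earlierNeighborFinset f v) ≤ k) (v : V) :
    Fin (k + 1) :=
  ((G.earlierNeighborFinset f v).attach.image fun u => greedyColoring hdeg u.1)ᶜ.min' <|
    (card_compl_lt_iff_nonempty _).1 <| by
      rw [compl_compl, Fintype.card_fin]
      exact Nat.lt_succ_of_le (card_image_le.trans (card_attach.trans_le (hdeg v)))
termination_by f v
decreasing_by exact (mem_filter.1 u.2).2.2

theorem greedyColoring_ne_of_adj_of_lt (hdeg : ∀ v, #(G.earlierNeighborFinset f v) ≤ k)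
    {u v : V} (hadj : G.Adj v u) (hlt : f u < f v) :
    greedyColoring hdeg u ≠ greedyColoring hdeg v := by
  have hfree := greedyColoring.eq_1 hdeg v ▸ min'_mem _ _
  have hu : u ∈ G.earlierNeighborFinset f v := by simp [earlierNeighborFinset, hadj, hlt]
  exact fun h => mem_compl.1 hfree (mem_image.2 ⟨⟨u, hu⟩, mem_attach _ _, h⟩)

theorem colorable_of_card_earlierNeighborFinset_le (hinj : Function.Injective f)
    (hdeg : ∀ v, #(G.earlierNeighborFinset f v) ≤ k) : G.Colorable (k + 1) :=
  ⟨Coloring.mk (greedyColoring hdeg) fun {u v} huv => by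
    rcases lt_or_gt_of_ne (hinj.ne huv.ne) with h | h
    · exact greedyColoring_ne_of_adj_of_lt hdeg huv.symm h
    · exact (greedyColoring_ne_of_adj_of_lt hdeg huv h).symm⟩

end Greedy

variable {V β : Type*} [LinearOrder β] {f : V → β}

theorem isAcyclic_of_forall_lower_neighbors_eq {H : SimpleGraph V} (hinj : Function.Injective f)
    (hlower : ∀ v u w, H.Adj v u → H.Adj v w → f u < f v → f w < f v → u = w) :
    H.IsAcyclic := by
  intro v p hp
  obtain ⟨m, hm, hmax⟩ := p.support.toFinset.exists_max_image f ⟨v, by simp⟩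
  have hm : m ∈ p.support := List.mem_toFinset.1 hm
  set q := p.rotate m hm
  have hq : q.IsCycle := hp.rotate hm
  have hlt : ∀ x ∈ q.support, x ≠ m → f x < f m := fun x hx hxm =>
    (hmax x (List.mem_toFinset.2 ((p.mem_support_rotate_iff m hm).1 hx))).lt_of_ne (hinj.ne hxm)
  have hsnd := q.adj_snd hq.not_nil
  have hpen := q.adj_penultimate hq.not_nil
  exact hq.snd_ne_penultimate <| hlower m _ _ hsnd hpen.symm
    (hlt _ (q.getVert_mem_support _) hsnd.ne') (hlt _ (q.getVert_mem_support _) hpen.ne)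

theorem Coloring.isAcyclic_fromRel_two_colors {α : Type*} {G : SimpleGraph V} (C : G.Coloring α)
    (hinj : Function.Injective f)
    (hclique : ∀ v u w, G.Adj v u → G.Adj v w → f u < f v → f w < f v → u ≠ w → G.Adj u w)
    (a b : α) :
    (fromRel fun u v => G.Adj u v ∧ (C u = a ∨ C u = b) ∧ (C v = a ∨ C v = b)).IsAcyclic := by
  refine isAcyclic_of_forall_lower_neighbors_eq hinj fun v u w hu hw hfu hfw => ?_
  have hsplit : ∀ {x y}, (fromRel fun u v => G.Adj u v ∧ (C u = a ∨ C u = b) ∧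
      (C v = a ∨ C v = b)).Adj x y → G.Adj x y ∧ (C x = a ∨ C x = b) ∧ (C y = a ∨ C y = b) := by
    rintro x y ⟨-, h | ⟨hyx, hy, hx⟩⟩
    exacts [h, ⟨hyx.symm, hx, hy⟩]
  obtain ⟨hvu, hv, hu⟩ := hsplit hu
  obtain ⟨hvw, -, hw⟩ := hsplit hw
  by_contra huw
  have hvu' := C.valid hvu
  have hvw' := C.valid hvw
  have huw' := C.valid (hclique v u w hvu hvw hfu hfw huw)
  -- `C v`, `C u`, `C w` are pairwise distinct but all lie in `{a, b}`
  grind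

end SimpleGraph

/-- If a finite simple graph `G` admits an ordering of its vertices
(encoded by an injection `f : V → ℕ`) such that every vertex has at most `k`
earlier neighbors and these earlier neighbors form a clique, then `G` admits an
acyclic proper vertex coloring with `k + 1` colors. -/
theorem stmt12 {V : Type*} [Fintype V] (G : SimpleGraph V) (k : ℕ) (f : V → ℕ)
    (hinj : Function.Injective f)
    (hdeg : ∀ v, (univ.filter fun u => G.Adj v u ∧ f u < f v).card ≤ k)
    (hclique : ∀ v u w, G.Adj v u → G.Adj v w → f u < f v → f w < f v →
      u ≠ w → G.Adj u w) :
    ∃ cV : V → Fin (k + 1), IsAcyclicProperColoring G cV := by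
  obtain ⟨C⟩ := G.colorable_of_card_earlierNeighborFinset_le hinj hdeg
  exact ⟨C, fun _ _ => C.valid, C.isAcyclic_fromRel_two_colors hinj hclique⟩
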